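/- arXiv:2401.13773 — 3 statements merged into one kernel-verified Lean document; each statement's English description precedes it below -/
import Mathlib

section
/- Let k ∈ [0, 1/ρ_1] and assume μ_1 − λ ≥ ρ_1. Then g_k(z) ≤ f(z) for all z ∈ [0, b], where f is the lifting function of the minimal cover. -/
/-- `μ_h = a_1 + ⋯ + a_h` (as a real number). -/
noncomputable def mu (a : ℕ → ℕ) (h : ℕ) : ℝ := ∑ i ∈ Finset.Icc 1 h, (a i : ℝ)

/-- `λ = μ_t − b`, the excess weight of the cover. -/
noncomputable def lam (a : ℕ → ℕ) (t b : ℕ) : ℝ := mu a t - (b : ℝ)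

/-- `ρ_h = max(0, a_{h+1} − (a_1 − λ))`. -/
noncomputable def rho (a : ℕ → ℕ) (t b : ℕ) (h : ℕ) : ℝ :=
  max 0 ((a (h + 1) : ℝ) - ((a 1 : ℝ) - lam a t b))

/-- `w_k(x) = k·x + (1 − k·ρ₁)/2`, where `r` stands for `ρ₁`. -/
noncomputable def wk (r k x : ℝ) : ℝ := k * x + (1 - k * r) / 2

/-!
The pieces `(μ_h − λ, μ_{h+1} − λ]`, `h = 0, …, t − 1`, cover `(0, b]`, and on the piece of
index `h` the lifting function equals `h`. For `h = 0` the piece is `F₀` because `ρ₀ = λ`, so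
`g_k = 0` there. For `h ≥ 1` the piece is `S_h ∪ F_h`: `g_k = h` on `F_h`, and `g_k = h − w_k(x)`
with `x ≥ 0` on `S_h`, where `w_k(x) ≥ 0` because `k·ρ₁ ≤ 1`.
-/

theorem exists_mem_Ioc_succ {α : Type*} [LinearOrder α] {s : ℕ → α} {z : α} {n : ℕ}
    (h0 : s 0 < z) (hn : z ≤ s n) : ∃ h < n, z ∈ Set.Ioc (s h) (s (h + 1)) := by
  induction n with
  | zero => exact absurd hn (not_le.mpr h0)
  | succ n ih =>
    by_cases hz : z ≤ s n
    · obtain ⟨h, hlt, hmem⟩ := ih hz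
      exact ⟨h, by omega, hmem⟩
    · exact ⟨n, n.lt_succ_self, not_le.mp hz, hn⟩

theorem wk_nonneg {r k x : ℝ} (hr : 0 ≤ r) (hk0 : 0 ≤ k) (hk1 : k ≤ 1 / r) (hx : 0 ≤ x) :
    0 ≤ wk r k x := by
  have hkr : k * r ≤ 1 := mul_le_of_le_div₀ zero_le_one hr hk1
  unfold wk
  linarith [mul_nonneg hk0 hx]

theorem mu_zero (a : ℕ → ℕ) : mu a 0 = 0 := by
  simp [mu]

theorem rho_nonneg (a : ℕ → ℕ) (t b h : ℕ) : 0 ≤ rho a t b h :=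
  le_max_left _ _

theorem rho_zero {a : ℕ → ℕ} {t b : ℕ} (hlam : 0 ≤ lam a t b) : rho a t b 0 = lam a t b := by
  simp [rho, hlam]

theorem gk_le_lifting_function_general
    (t b : ℕ) (a : ℕ → ℕ) (k : ℝ) (g f : ℝ → ℝ)
    (hcover : (b : ℝ) < mu a t)
    (hk0 : 0 ≤ k) (hk1 : k ≤ 1 / rho a t b 1)
    (hmain : rho a t b 1 ≤ mu a 1 - lam a t b)
    (hg0 : g 0 = 0)
    (hgF : ∀ h : ℕ, h ≤ t - 1 → ∀ z : ℝ,
      mu a h - lam a t b + rho a t b h < z → z ≤ mu a (h + 1) - lam a t b →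
      g z = (h : ℝ))
    (hgS : ∀ h : ℕ, 1 ≤ h → h ≤ t - 1 → ∀ z : ℝ,
      mu a h - lam a t b < z → z ≤ mu a h - lam a t b + rho a t b h →
      g z = (h : ℝ) - wk (rho a t b 1) (k) (mu a h - lam a t b + rho a t b h - z))
    (hf0 : ∀ z : ℝ, 0 ≤ z → z ≤ mu a 1 - lam a t b → f z = 0)
    (hfS : ∀ h : ℕ, 1 ≤ h → h ≤ t - 1 → ∀ z : ℝ,
      mu a h - lam a t b < z → z ≤ mu a (h + 1) - lam a t b → f z = (h : ℝ))
    :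
    ∀ z : ℝ, 0 ≤ z → z ≤ (b : ℝ) → g z ≤ f z := by
  intro z hz0 hzb
  have hlam : 0 < lam a t b := by unfold lam; linarith
  rcases hz0.eq_or_lt with rfl | hz
  · rw [hg0, hf0 0 le_rfl ((rho_nonneg a t b 1).trans hmain)]
  obtain ⟨h, hht, hlow, hup⟩ := exists_mem_Ioc_succ (s := fun h => mu a h - lam a t b)
    (z := z) (n := t) (by simp only [mu_zero]; linarith) (by unfold lam; linarith)
  rcases Nat.eq_zero_or_pos h with rfl | hh
  · rw [hf0 z hz0 (by simpa using hup),
      hgF 0 (Nat.zero_le _) z (by rw [mu_zero, rho_zero hlam.le]; linarith) hup]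
    simp
  rw [hfS h hh (by omega) z hlow hup]
  by_cases hS : z ≤ mu a h - lam a t b + rho a t b h
  · rw [hgS h hh (by omega) z hlow hS]
    have hw := wk_nonneg (x := mu a h - lam a t b + rho a t b h - z) (rho_nonneg a t b 1) hk0 hk1
      (by linarith)
    linarith
  · rw [hgF h (by omega) z (by linarith) hup]

/-- If `k ∈ [0, 1/ρ₁]` and `μ₁ − λ ≥ ρ₁`, then `g_k(z) ≤ f(z)`
for all `z ∈ [0, b]`, where `f` is the lifting function of the minimal cover. -/
theorem gk_le_lifting_function
    (t b : ℕ) (a : ℕ → ℕ) (k : ℝ) (g f : ℝ → ℝ)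
    (ht : 2 ≤ t)
    (hpos : ∀ i, 1 ≤ i → i ≤ t → 0 < a i)
    (hmono : ∀ i j, 1 ≤ i → i ≤ j → j ≤ t → a j ≤ a i)
    (hcover : (b : ℝ) < mu a t)
    (hmin : mu a t - (a t : ℝ) ≤ (b : ℝ))
    (hrho1 : 0 < rho a t b 1)
    (hk0 : 0 ≤ k) (hk1 : k ≤ 1 / rho a t b 1)
    (hmain : rho a t b 1 ≤ mu a 1 - lam a t b)
    (hg0 : g 0 = 0)
    (hgF : ∀ h : ℕ, h ≤ t - 1 → ∀ z : ℝ,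
      mu a h - lam a t b + rho a t b h < z → z ≤ mu a (h + 1) - lam a t b →
      g z = (h : ℝ))
    (hgS : ∀ h : ℕ, 1 ≤ h → h ≤ t - 1 → ∀ z : ℝ,
      mu a h - lam a t b < z → z ≤ mu a h - lam a t b + rho a t b h →
      g z = (h : ℝ) - wk (rho a t b 1) (k) (mu a h - lam a t b + rho a t b h - z))
    (hf0 : ∀ z : ℝ, 0 ≤ z → z ≤ mu a 1 - lam a t b → f z = 0)
    (hfS : ∀ h : ℕ, 1 ≤ h → h ≤ t - 1 → ∀ z : ℝ,
      mu a h - lam a t b < z → z ≤ mu a (h + 1) - lam a t b → f z = (h : ℝ))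
    :
    ∀ z : ℝ, 0 ≤ z → z ≤ (b : ℝ) → g z ≤ f z :=
  gk_le_lifting_function_general t b a k g f hcover hk0 hk1 hmain hg0 hgF hgS hf0 hfS
end

section
/- Assume μ_1 − λ ≥ ρ_1 > 0. (i) If h ∈ {1, …, t−1}, ρ_h > ρ_1/2, and z satisfies μ_h − λ < z ≤ μ_h − λ + ρ_h − ρ_1/2 (so z ∈ S_h), then μ_{h−1} < z < μ_h. (ii) If h ∈ {0, …, t−1} and z ∈ F_h satisfies z ≥ μ_h, then μ_h ≤ z < μ_{h+1}. -/
/-!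
Since `0 < λ ≤ a_t ≤ a_h`, the point `μ_h − λ` lies in `[μ_{h−1}, μ_h)`, which gives the lower
bound in (i) and, one index up, the upper bound in (ii). Since `a_{h+1} ≤ a_1`, `ρ_h ≤ λ`, so the
right end `μ_h − λ + ρ_h − ρ_1/2` of the window in (i) is at most `μ_h − ρ_1/2 < μ_h`.
-/

section Cover

variable {a : ℕ → ℕ} {t b : ℕ}

theorem mu_succ (a : ℕ → ℕ) (k : ℕ) : mu a (k + 1) = mu a k + a (k + 1) :=
  Finset.sum_Icc_succ_top (Nat.le_add_left 1 k) _

theorem lam_pos (hcover : (b : ℝ) < mu a t) : 0 < lam a t b := by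
  unfold lam
  linarith

theorem lam_le (hmin : mu a t - (a t : ℝ) ≤ (b : ℝ)) : lam a t b ≤ a t := by
  unfold lam
  linarith

theorem mu_pred_le_mu_sub_lam {h : ℕ} (hh : 1 ≤ h) (hmin : mu a t - (a t : ℝ) ≤ (b : ℝ))
    (hat : a t ≤ a h) : mu a (h - 1) ≤ mu a h - lam a t b := by
  obtain ⟨k, rfl⟩ : ∃ k, h = k + 1 := ⟨h - 1, by omega⟩
  have hat' : (a t : ℝ) ≤ a (k + 1) := by exact_mod_cast hat
  rw [mu_succ, Nat.add_sub_cancel]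
  linarith [lam_le hmin]

theorem rho_le_lam {h : ℕ} (hlam : 0 ≤ lam a t b) (ha : a (h + 1) ≤ a 1) :
    rho a t b h ≤ lam a t b := by
  have ha' : (a (h + 1) : ℝ) ≤ a 1 := by exact_mod_cast ha
  exact max_le hlam (by linarith)

end Cover

theorem interval_location_general
    (t b : ℕ) (a : ℕ → ℕ)
    (hmono : ∀ i j, 1 ≤ i → i ≤ j → j ≤ t → a j ≤ a i)
    (hcover : (b : ℝ) < mu a t)
    (hmin : mu a t - (a t : ℝ) ≤ (b : ℝ))
    (hrho1 : 0 < rho a t b 1)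
    :
    (∀ h : ℕ, 1 ≤ h → h ≤ t - 1 → rho a t b 1 / 2 < rho a t b h →
      ∀ z : ℝ, mu a h - lam a t b < z →
        z ≤ mu a h - lam a t b + rho a t b h - rho a t b 1 / 2 →
        mu a (h - 1) < z ∧ z < mu a h) ∧
    (∀ h : ℕ, h ≤ t - 1 →
      ∀ z : ℝ, mu a h - lam a t b + rho a t b h < z →
        z ≤ mu a (h + 1) - lam a t b → mu a h ≤ z →
        mu a h ≤ z ∧ z < mu a (h + 1)) := by
  have hlam := lam_pos hcover
  refine ⟨fun h h1 ht _ z hz_gt hz_le => ⟨?_, ?_⟩, fun h _ z _ hz_le hz_ge => ⟨hz_ge, ?_⟩⟩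
  · calc mu a (h - 1) ≤ mu a h - lam a t b :=
          mu_pred_le_mu_sub_lam h1 hmin (hmono h t h1 (by omega) le_rfl)
      _ < z := hz_gt
  · have := rho_le_lam hlam.le (hmono 1 (h + 1) le_rfl (by omega) (by omega))
    linarith
  · linarith

/-- Assume `μ₁ − λ ≥ ρ₁ > 0`.
(i) If `1 ≤ h ≤ t−1`, `ρ_h > ρ₁/2` and `μ_h − λ < z ≤ μ_h − λ + ρ_h − ρ₁/2`,
then `μ_{h−1} < z < μ_h`.
(ii) If `h ≤ t−1`, `z ∈ F_h` and `z ≥ μ_h`, then `μ_h ≤ z < μ_{h+1}`. -/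
theorem interval_location
    (t b : ℕ) (a : ℕ → ℕ)
    (ht : 2 ≤ t)
    (hpos : ∀ i, 1 ≤ i → i ≤ t → 0 < a i)
    (hmono : ∀ i j, 1 ≤ i → i ≤ j → j ≤ t → a j ≤ a i)
    (hcover : (b : ℝ) < mu a t)
    (hmin : mu a t - (a t : ℝ) ≤ (b : ℝ))
    (hrho1 : 0 < rho a t b 1)
    (hmain : rho a t b 1 ≤ mu a 1 - lam a t b)
    :
    (∀ h : ℕ, 1 ≤ h → h ≤ t - 1 → rho a t b 1 / 2 < rho a t b h →
      ∀ z : ℝ, mu a h - lam a t b < z →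
        z ≤ mu a h - lam a t b + rho a t b h - rho a t b 1 / 2 →
        mu a (h - 1) < z ∧ z < mu a h) ∧
    (∀ h : ℕ, h ≤ t - 1 →
      ∀ z : ℝ, mu a h - lam a t b + rho a t b h < z →
        z ≤ mu a (h + 1) - lam a t b → mu a h ≤ z →
        mu a h ≤ z ∧ z < mu a (h + 1)) :=
  interval_location_general t b a hmono hcover hmin hrho1
end

section
/- Assume μ_1 − λ ≥ ρ_1 > 0. Let m ≥ 2, let h_1, …, h_m ∈ {1, …, t−1} with ρ_{h_j} > 0 for every j, let z_1, …, z_m be reals with z_j > μ_{h_j} − λ for every j, and set H = h_1 + ⋯ + h_m. If H − ⌊m/2⌋ ≤ t, then z_1 + ⋯ + z_m > μ_{H − ⌊m/2⌋} − λ. -/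
/-!
Write `h_j = k_j + 1` and `S = ∑ k_j`, so that `H − ⌊m/2⌋ = (S + 1) + d` with
`2d ≤ m − 1`. Because `a` is nonincreasing, `μ_{p+q+1} + μ_1 ≤ μ_{p+1} + μ_{q+1}`, and
iterating gives `μ_{S+1} + (m − 1) μ_1 ≤ ∑ μ_{h_j}`. The remaining `d` summands of
`μ_{H−⌊m/2⌋}` are each at most `a_2 ≤ 2 (a_1 − λ)` (this is `ρ_1 ≤ μ_1 − λ`), so together at
most `(m − 1)(μ_1 − λ)`. Adding up, `μ_{H−⌊m/2⌋} − λ ≤ ∑ (μ_{h_j} − λ) < ∑ z_j`.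
-/

section PartialSums

variable {a : ℕ → ℕ} {t : ℕ}

theorem mu_eq_sum_range (a : ℕ → ℕ) (h : ℕ) : mu a h = ∑ i ∈ Finset.range h, (a (i + 1) : ℝ) := by
  induction h with
  | zero => simp [mu]
  | succ h ih => rw [mu, Finset.sum_Icc_succ_top (by omega), ← mu, ih, Finset.sum_range_succ]

theorem mu_one (a : ℕ → ℕ) : mu a 1 = a 1 := by simp [mu_eq_sum_range]

theorem mu_add (a : ℕ → ℕ) (p q : ℕ) :
    mu a (p + q) = mu a p + ∑ i ∈ Finset.range q, (a (p + i + 1) : ℝ) := by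
  simp only [mu_eq_sum_range, Finset.sum_range_add, add_assoc]

theorem mu_add_le_add_mul (hmono : ∀ i j, 1 ≤ i → i ≤ j → j ≤ t → a j ≤ a i)
    {p d i : ℕ} (hi : 1 ≤ i) (hip : i ≤ p + 1) (hpd : p + d ≤ t) :
    mu a (p + d) ≤ mu a p + d * a i := by
  rw [mu_add]
  gcongr
  calc ∑ j ∈ Finset.range d, (a (p + j + 1) : ℝ)
      ≤ ∑ _j ∈ Finset.range d, (a i : ℝ) := by
        gcongr with j hj
        exact hmono i _ hi (by omega) (by simp at hj; omega)
    _ = d * a i := by simp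

theorem mu_add_add_one_add_mu_one_le (hmono : ∀ i j, 1 ≤ i → i ≤ j → j ≤ t → a j ≤ a i)
    {p q : ℕ} (hpq : p + q + 1 ≤ t) :
    mu a (p + q + 1) + mu a 1 ≤ mu a (p + 1) + mu a (q + 1) := by
  have hshift : ∑ i ∈ Finset.range q, (a (p + 1 + i + 1) : ℝ)
      ≤ ∑ i ∈ Finset.range q, (a (1 + i + 1) : ℝ) := by
    gcongr with i hi
    exact hmono _ _ (by omega) (by omega) (by simp at hi; omega)
  rw [add_right_comm, mu_add a (p + 1), add_comm q, mu_add a 1]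
  linarith

theorem mu_sum_add_one_add_card_mul_le {ι : Type*}
    (hmono : ∀ i j, 1 ≤ i → i ≤ j → j ≤ t → a j ≤ a i) (s : Finset ι) (k : ι → ℕ)
    (hk : ∑ i ∈ s, k i + 1 ≤ t) :
    mu a (∑ i ∈ s, k i + 1) + s.card * mu a 1 ≤ ∑ i ∈ s, mu a (k i + 1) + mu a 1 := by
  classical
  induction s using Finset.induction_on with
  | empty => simp
  | insert j s hj ih =>
    rw [Finset.sum_insert hj] at hk ⊢
    rw [Finset.sum_insert hj, Finset.card_insert_of_notMem hj]
    have hstep := mu_add_add_one_add_mu_one_le hmono hk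
    push_cast
    linarith [ih (by omega)]

end PartialSums

theorem a_succ_le_two_mul_of_rho_le {a : ℕ → ℕ} {t b h : ℕ}
    (hrho : rho a t b h ≤ mu a 1 - lam a t b) :
    (a (h + 1) : ℝ) ≤ 2 * (mu a 1 - lam a t b) := by
  rw [rho, mu_one] at *
  linarith [le_max_right 0 ((a (h + 1) : ℝ) - (a 1 - lam a t b))]

theorem multi_sum_lower_bound_general
    (t b : ℕ) (a : ℕ → ℕ) (m : ℕ) (hs : Fin m → ℕ) (z : Fin m → ℝ)
    (hmono : ∀ i j, 1 ≤ i → i ≤ j → j ≤ t → a j ≤ a i)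
    (hmain : rho a t b 1 ≤ mu a 1 - lam a t b)
    (hm : 2 ≤ m)
    (hs1 : ∀ j, 1 ≤ hs j)
    (hz : ∀ j, mu a (hs j) - lam a t b < z j)
    (hHt : (∑ j, hs j) - m / 2 ≤ t) :
    mu a ((∑ j, hs j) - m / 2) - lam a t b < ∑ j, z j := by
  obtain ⟨k, rfl⟩ : ∃ k : Fin m → ℕ, hs = fun j => k j + 1 :=
    ⟨fun j => hs j - 1, funext fun j => by dsimp only; have := hs1 j; omega⟩
  have hH : ∑ j, (k j + 1) = ∑ j, k j + m := by simp [Finset.sum_add_distrib]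
  set S := ∑ j, k j
  set d := m - 1 - m / 2
  have hK : ∑ j, (k j + 1) - m / 2 = S + 1 + d := by omega
  rw [hK] at hHt ⊢
  have hchain := mu_sum_add_one_add_card_mul_le hmono Finset.univ k (by omega)
  have htail := mu_add_le_add_mul hmono (i := 1 + 1) (by omega) (by omega) hHt
  have ha₂ := a_succ_le_two_mul_of_rho_le hmain
  have hc : 0 ≤ mu a 1 - lam a t b := (le_max_left _ _).trans hmain
  have hd : 2 * (d : ℝ) + 1 ≤ m := by exact_mod_cast (by omega : 2 * d + 1 ≤ m)
  have hsum : ∑ j, (mu a (k j + 1) - lam a t b) < ∑ j, z j :=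
    Finset.sum_lt_sum_of_nonempty ⟨⟨0, by omega⟩, Finset.mem_univ _⟩ fun j _ => hz j
  rw [Finset.sum_sub_distrib] at hsum
  simp only [Finset.sum_const, Finset.card_univ, Fintype.card_fin, nsmul_eq_mul] at hchain hsum
  linarith [mul_le_mul_of_nonneg_left ha₂ d.cast_nonneg, mul_le_mul_of_nonneg_right hd hc]

/-- Assume `μ₁ − λ ≥ ρ₁ > 0`. For `m ≥ 2` indices
`h₁, …, h_m ∈ {1, …, t−1}` with `ρ_{h_j} > 0` and reals `z_j > μ_{h_j} − λ`, if
`H − ⌊m/2⌋ ≤ t` where `H = h₁ + ⋯ + h_m`, then `∑ⱼ z_j > μ_{H−⌊m/2⌋} − λ`. -/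
theorem multi_sum_lower_bound
    (t b : ℕ) (a : ℕ → ℕ) (m : ℕ) (hs : Fin m → ℕ) (z : Fin m → ℝ)
    (ht : 2 ≤ t)
    (hpos : ∀ i, 1 ≤ i → i ≤ t → 0 < a i)
    (hmono : ∀ i j, 1 ≤ i → i ≤ j → j ≤ t → a j ≤ a i)
    (hcover : (b : ℝ) < mu a t)
    (hmin : mu a t - (a t : ℝ) ≤ (b : ℝ))
    (hrho1 : 0 < rho a t b 1)
    (hmain : rho a t b 1 ≤ mu a 1 - lam a t b)
    (hm : 2 ≤ m)
    (hs1 : ∀ j, 1 ≤ hs j) (hst : ∀ j, hs j ≤ t - 1)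
    (hsrho : ∀ j, 0 < rho a t b (hs j))
    (hz : ∀ j, mu a (hs j) - lam a t b < z j)
    (hHt : (∑ j, hs j) - m / 2 ≤ t) :
    mu a ((∑ j, hs j) - m / 2) - lam a t b < ∑ j, z j :=
  multi_sum_lower_bound_general t b a m hs z hmono hmain hm hs1 hz hHt
end
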